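/- arXiv:0708.0756 — 2 statements merged into one kernel-verified Lean document; each statement's English description precedes it below -/
import Mathlib

section
/- Let p > 1, C > 0, α > 0, and z as above (even blow-up solution of z'' = C z^p on (-α,α)). Then lim_{t→α⁻} (α - t)^{2/(p-1)} z(t) = (2(p+1)/(C(p-1)²))^{1/(p-1)}. -/
/-!
Multiplying `z'' = C z^p` by `z'` gives the first integral
`(p + 1) z'² = 2C (z^(p+1) - z(0)^(p+1))`, since `z'(0) = 0` by evenness. As `z → ∞`,
this yields `z' / z^((p+1)/2) → √(2C/(p+1))`, i.e. `u = z^(-(p-1)/2)` has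
`u' → -L` with `L = (p-1)/2 · √(2C/(p+1))`. Since `u → 0` at `α`, L'Hôpital gives
`u(t) / (α - t) → L`, and raising to the power `-2/(p-1)` is the claimed rate.
-/

open Real Set Filter Topology

theorem Function.Even.eq_zero_of_hasDerivAt_zero {f : ℝ → ℝ} {f' : ℝ} (hf : Function.Even f)
    (h : HasDerivAt f f' 0) : f' = 0 := by
  have hodd : deriv f 0 = -deriv f 0 := by
    simpa only [funext hf, neg_zero] using deriv_comp_neg (f := f) (x := 0)
  linarith [h.deriv]

section FirstIntegral

variable {p C t : ℝ} {z z' : ℝ → ℝ}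

theorem hasDerivAt_energy (hzt : 0 < z t) (hz' : HasDerivAt z (z' t) t)
    (hz'' : HasDerivAt z' (C * z t ^ p) t) :
    HasDerivAt (fun s => (p + 1) * z' s ^ 2 - 2 * C * z s ^ (p + 1)) 0 t := by
  have h := ((hz''.fun_pow 2).const_mul (p + 1)).sub
    ((hz'.rpow_const (p := p + 1) (Or.inl hzt.ne')).const_mul (2 * C))
  refine h.congr_deriv ?_
  rw [add_sub_cancel_right]
  ring

theorem energy_eq_of_mem_Ioo {a b s : ℝ} (hpos : ∀ t ∈ Ioo a b, 0 < z t)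
    (hz' : ∀ t ∈ Ioo a b, HasDerivAt z (z' t) t)
    (hz'' : ∀ t ∈ Ioo a b, HasDerivAt z' (C * z t ^ p) t) (hs : s ∈ Ioo a b)
    (ht : t ∈ Ioo a b) :
    (p + 1) * z' t ^ 2 - 2 * C * z t ^ (p + 1) = (p + 1) * z' s ^ 2 - 2 * C * z s ^ (p + 1) :=
  have hE := fun t ht => hasDerivAt_energy (hpos t ht) (hz' t ht) (hz'' t ht)
  isOpen_Ioo.is_const_of_deriv_eq_zero isPreconnected_Ioo
    (fun t ht => (hE t ht).differentiableAt.differentiableWithinAt)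
    (fun t ht => (hE t ht).deriv) ht hs

end FirstIntegral

theorem tendsto_div_sub_of_tendsto_deriv {u u' : ℝ → ℝ} {α L : ℝ}
    (hu : ∀ᶠ t in 𝓝[<] α, HasDerivAt u (u' t) t) (hu0 : Tendsto u (𝓝[<] α) (𝓝 0))
    (hu' : Tendsto u' (𝓝[<] α) (𝓝 (-L))) :
    Tendsto (fun t => u t / (α - t)) (𝓝[<] α) (𝓝 L) := by
  refine HasDerivAt.lhopital_zero_nhdsLT (g' := fun _ => -1) hu
    (Eventually.of_forall fun t => by simpa using (hasDerivAt_id t).const_sub α)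
    (Eventually.of_forall fun _ => by norm_num) hu0 ?_ ?_
  · have h : Tendsto (fun t => α - t) (𝓝 α) (𝓝 (α - α)) :=
      tendsto_const_nhds.sub tendsto_id
    simpa using h.mono_left nhdsWithin_le_nhds
  · simpa only [div_neg, div_one, neg_neg] using hu'.neg

section BlowUp

variable {p C K α : ℝ} {z z' : ℝ → ℝ}

theorem tendsto_deriv_mul_rpow_of_energy {l : Filter ℝ} (hp : 0 < p + 1)
    (hpos : ∀ᶠ t in l, 0 < z t) (hz'_nonneg : ∀ᶠ t in l, 0 ≤ z' t)
    (henergy : ∀ᶠ t in l, (p + 1) * z' t ^ 2 = 2 * C * (z t ^ (p + 1) - K))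
    (hblow : Tendsto z l atTop) :
    Tendsto (fun t => z' t * z t ^ (-((p + 1) / 2))) l (𝓝 √(2 * C / (p + 1))) := by
  have hlim : Tendsto (fun t => √(2 * C / (p + 1) * (1 - K * z t ^ (-(p + 1))))) l
      (𝓝 √(2 * C / (p + 1) * (1 - K * 0))) :=
    ((tendsto_rpow_neg_atTop hp).comp hblow |>.const_mul K |>.const_sub 1 |>.const_mul _).sqrt
  rw [mul_zero, sub_zero, mul_one] at hlim
  refine hlim.congr' ?_
  filter_upwards [hpos, hz'_nonneg, henergy] with t hzt hz't hEt
  have hsq : (z t ^ (-((p + 1) / 2))) ^ 2 = z t ^ (-(p + 1)) := by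
    rw [← rpow_natCast, ← rpow_mul hzt.le]; norm_num
  have hinv : z t ^ (-(p + 1)) * z t ^ (p + 1) = 1 := by
    rw [← rpow_add hzt]; simp
  rw [← sqrt_sq (mul_nonneg hz't (rpow_nonneg hzt.le _)), mul_pow, hsq]
  congr 1
  rw [div_mul_eq_mul_div, div_eq_iff hp.ne']
  linear_combination -z t ^ (-(p + 1)) * hEt - 2 * C * hinv

theorem tendsto_sub_rpow_mul_of_energy (hp : 1 < p) (hC : 0 < C)
    (hpos : ∀ᶠ t in 𝓝[<] α, 0 < z t) (hz' : ∀ᶠ t in 𝓝[<] α, HasDerivAt z (z' t) t)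
    (hz'_nonneg : ∀ᶠ t in 𝓝[<] α, 0 ≤ z' t)
    (henergy : ∀ᶠ t in 𝓝[<] α, (p + 1) * z' t ^ 2 = 2 * C * (z t ^ (p + 1) - K))
    (hblow : Tendsto z (𝓝[<] α) atTop) :
    Tendsto (fun t => (α - t) ^ (2 / (p - 1)) * z t) (𝓝[<] α)
      (𝓝 ((2 * (p + 1) / (C * (p - 1) ^ 2)) ^ ((1 : ℝ) / (p - 1)))) := by
  have hp1 : 0 < p - 1 := sub_pos.2 hp
  set m := (p - 1) / 2 with hm_def
  have hm : 0 < m := by positivity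
  set L := m * √(2 * C / (p + 1))
  have hL : 0 < L := mul_pos hm (sqrt_pos.2 (by positivity))
  have hrate : Tendsto (fun t => z t ^ (-m) / (α - t)) (𝓝[<] α) (𝓝 L) := by
    refine tendsto_div_sub_of_tendsto_deriv (u' := fun t => z' t * (-m) * z t ^ (-m - 1))
      ?_ ((tendsto_rpow_neg_atTop hm).comp hblow) ?_
    · filter_upwards [hz', hpos] with t h ht using h.rpow_const (Or.inl ht.ne')
    · have hexp : -m - 1 = -((p + 1) / 2) := by ring
      convert (tendsto_deriv_mul_rpow_of_energy (by linarith) hpos hz'_nonneg henergy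
        hblow).const_mul (-m) using 2 with t
      · rw [hexp]; ring
      · ring
  have hval :
      L ^ (-(2 / (p - 1))) = (2 * (p + 1) / (C * (p - 1) ^ 2)) ^ ((1 : ℝ) / (p - 1)) := by
    have hL2 : L ^ (2 : ℝ) = C * (p - 1) ^ 2 / (2 * (p + 1)) := by
      rw [rpow_two, mul_pow, sq_sqrt (by positivity)]
      field_simp
      ring
    rw [show -(2 / (p - 1)) = 2 * -(1 / (p - 1)) by ring, rpow_mul hL.le, hL2,
      rpow_neg (by positivity), ← inv_rpow (by positivity), inv_div]
  rw [← hval]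
  refine ((continuousAt_rpow_const L _ (Or.inl hL.ne')).tendsto.comp hrate).congr' ?_
  filter_upwards [hpos, self_mem_nhdsWithin] with t hzt (hlt : t < α)
  have hzm : (z t ^ (-m)) ^ (-(2 / (p - 1))) = z t := by
    rw [← rpow_mul hzt.le, hm_def, show -((p - 1) / 2) * -(2 / (p - 1)) = 1 by field_simp,
      rpow_one]
  rw [Function.comp_apply, div_rpow (rpow_nonneg hzt.le _) (sub_pos.2 hlt).le, hzm,
    rpow_neg (sub_pos.2 hlt).le, div_inv_eq_mul, mul_comm]

end BlowUp

/-- Keller–Osserman blow-up rate for the even blow-up solution of `z'' = C z^p`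
on `(-α, α)`: `lim_{t→α⁻} (α - t)^{2/(p-1)} z(t) = (2(p+1)/(C(p-1)²))^{1/(p-1)}`. -/
theorem stmt_11 (p C α : ℝ) (hp : 1 < p) (hC : 0 < C) (hα : 0 < α)
    (z z' : ℝ → ℝ)
    (hpos : ∀ t ∈ Ioo (-α) α, 0 < z t)
    (heven : ∀ t, z (-t) = z t)
    (hz' : ∀ t ∈ Ioo (-α) α, HasDerivAt z (z' t) t)
    (hz'' : ∀ t ∈ Ioo (-α) α, HasDerivAt z' (C * (z t) ^ p) t)
    (hblow : Tendsto z (nhdsWithin α (Iio α)) atTop) :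
    Tendsto (fun t => (α - t) ^ (2 / (p - 1)) * z t) (nhdsWithin α (Iio α))
      (nhds ((2 * (p + 1) / (C * (p - 1) ^ 2)) ^ ((1 : ℝ) / (p - 1)))) := by
  have h0 : (0 : ℝ) ∈ Ioo (-α) α := ⟨neg_lt_zero.2 hα, hα⟩
  have hz'0 : z' 0 = 0 := Function.Even.eq_zero_of_hasDerivAt_zero heven (hz' 0 h0)
  have hmono : StrictMonoOn z' (Ioo (-α) α) :=
    strictMonoOn_of_hasDerivWithinAt_pos (convex_Ioo _ _)
      (fun t ht => (hz'' t ht).continuousAt.continuousWithinAt)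
      (fun t ht => (hz'' t (interior_subset ht)).hasDerivWithinAt)
      (fun t ht => mul_pos hC (rpow_pos_of_pos (hpos t (interior_subset ht)) p))
  have hright : ∀ᶠ t in 𝓝[<] α, t ∈ Ioo 0 α := Ioo_mem_nhdsLT hα
  have hsub : Ioo 0 α ⊆ Ioo (-α) α := Ioo_subset_Ioo_left (neg_nonpos.2 hα.le)
  refine tendsto_sub_rpow_mul_of_energy (K := z 0 ^ (p + 1)) hp hC
    (hright.mono fun t ht => hpos t (hsub ht)) (hright.mono fun t ht => hz' t (hsub ht))
    (hright.mono fun t ht => ?_) (hright.mono fun t ht => ?_) hblow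
  · exact hz'0 ▸ (hmono h0 (hsub ht) ht.1).le
  · have := energy_eq_of_mem_Ioo hpos hz' hz'' h0 (hsub ht)
    rw [hz'0] at this
    linear_combination this
end

section
/- Let p > 1, N ≥ 1, β ∈ ℝ, and define g(s) = (∫₀^s r^{−(N-1)(p-1)/(p+3)} h(r)^{2/(p+3)} dr)^{−(p+3)/(p-1)} where h(r) = exp(−ω(r)/r²) and ω(r) = r^{2−α₀} with 0 < α₀ < 2 and (N-1)(p-1)/(p+3) < 1. Then for every ν₀ > 0 there exists s₀ > 0 such that for all s ∈ (0, s₀): exp( (2(1−ν₀)/(p-1)) · ω(s)/s² ) ≤ g(s) ≤ exp( (2(1+ν₀)/(p-1)) · ω(s)/s² ). -/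
/-!
For `r > 0` the integrand is `r ^ (-a) * exp (-(c * r ^ (-α₀)))` with `a = (N-1)(p-1)/(p+3) ∈ [0, 1)`
and `c = 2/(p+3)`, so `g = F ^ (-(p+3)/(p-1))` where `F(s)` is its integral over `(0, s)`.
Since `r ^ (-α₀)` decreases, `F(s) ≤ exp (-(c s ^ (-α₀))) · s ^ (1-a)/(1-a)`, while integrating
only over `[θ s, s]` gives `F(s) ≥ (1 - θ) s ^ (1-a) exp (-(c θ ^ (-α₀) s ^ (-α₀)))`.
Taking `θ` close to `1` and using that `exp (-κ s ^ (-α₀))` is smaller than any power of `s`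
as `s → 0⁺`, `F(s) = exp (-(c (1 + o(1)) s ^ (-α₀)))`, and raising to the power
`-(p+3)/(p-1) = -2/(c(p-1))` gives the two bounds on `g`.
-/

open Real Set intervalIntegral Filter Topology MeasureTheory

section

variable {a c α : ℝ}

theorem intervalIntegrable_rpow_neg_mul_exp (ha : a < 1) (hc : 0 ≤ c) {s : ℝ} (hs : 0 ≤ s) :
    IntervalIntegrable (fun r => r ^ (-a) * exp (-(c * r ^ (-α)))) volume 0 s := by
  refine (intervalIntegrable_iff_integrableOn_Ioc_of_le hs).2 <|
    (intervalIntegrable_rpow' (r := -a) (by linarith)).1.mul_bdd (c := 1) (by fun_prop)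
      (ae_restrict_of_forall_mem measurableSet_Ioc fun r hr => ?_)
  rw [norm_of_nonneg (exp_pos _).le, exp_le_one_iff, neg_nonpos]
  exact mul_nonneg hc (rpow_nonneg hr.1.le _)

theorem integral_rpow_neg_mul_exp_le (ha : a < 1) (hc : 0 ≤ c) (hα : 0 ≤ α) {s : ℝ}
    (hs : 0 < s) :
    ∫ r in (0 : ℝ)..s, r ^ (-a) * exp (-(c * r ^ (-α))) ≤
      exp (-(c * s ^ (-α))) * (s ^ (1 - a) / (1 - a)) :=
  calc ∫ r in (0 : ℝ)..s, r ^ (-a) * exp (-(c * r ^ (-α)))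
      ≤ ∫ r in (0 : ℝ)..s, exp (-(c * s ^ (-α))) * r ^ (-a) := by
        refine integral_mono_on_of_le_Ioo hs.le (intervalIntegrable_rpow_neg_mul_exp ha hc hs.le)
          ((intervalIntegrable_rpow' (by linarith)).const_mul _) fun r hr => ?_
        rw [mul_comm]
        refine mul_le_mul_of_nonneg_right (exp_le_exp.2 (neg_le_neg ?_)) (rpow_nonneg hr.1.le _)
        exact mul_le_mul_of_nonneg_left (rpow_le_rpow_of_nonpos hr.1 hr.2.le (neg_nonpos.2 hα)) hc
    _ = exp (-(c * s ^ (-α))) * (s ^ (1 - a) / (1 - a)) := by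
        rw [intervalIntegral.integral_const_mul, integral_rpow (Or.inl (by linarith)),
          zero_rpow (by linarith), neg_add_eq_sub, sub_zero]

theorem le_integral_rpow_neg_mul_exp (ha₀ : 0 ≤ a) (ha : a < 1) (hc : 0 ≤ c) (hα : 0 ≤ α)
    {θ s : ℝ} (hθ₀ : 0 < θ) (hθ₁ : θ ≤ 1) (hs : 0 < s) :
    (1 - θ) * s ^ (1 - a) * exp (-(c * (θ * s) ^ (-α))) ≤
      ∫ r in (0 : ℝ)..s, r ^ (-a) * exp (-(c * r ^ (-α))) := by
  have hθs : 0 < θ * s := mul_pos hθ₀ hs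
  have hθs_le : θ * s ≤ s := mul_le_of_le_one_left hs.le hθ₁
  have hint := intervalIntegrable_rpow_neg_mul_exp (α := α) ha hc hs.le
  calc (1 - θ) * s ^ (1 - a) * exp (-(c * (θ * s) ^ (-α)))
      = ∫ _ in θ * s..s, s ^ (-a) * exp (-(c * (θ * s) ^ (-α))) := by
        rw [intervalIntegral.integral_const, smul_eq_mul, sub_eq_add_neg 1 a, rpow_add hs, rpow_one]
        ring
    _ ≤ ∫ r in θ * s..s, r ^ (-a) * exp (-(c * r ^ (-α))) := by
        refine integral_mono_on_of_le_Ioo hθs_le intervalIntegrable_const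
          (hint.mono_set (uIcc_subset_uIcc (mem_uIcc_of_le hθs.le hθs_le)
            right_mem_uIcc)) fun r hr => ?_
        have hr₀ : 0 < r := hθs.trans hr.1
        refine mul_le_mul (rpow_le_rpow_of_nonpos hr₀ hr.2.le (neg_nonpos.2 ha₀))
          (exp_le_exp.2 (neg_le_neg ?_)) (exp_pos _).le (rpow_nonneg hr₀.le _)
        exact mul_le_mul_of_nonneg_left (rpow_le_rpow_of_nonpos hθs hr.1.le (neg_nonpos.2 hα)) hc
    _ ≤ ∫ r in (0 : ℝ)..s, r ^ (-a) * exp (-(c * r ^ (-α))) :=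
        integral_mono_interval hθs.le hθs_le le_rfl
          (ae_restrict_of_forall_mem measurableSet_Ioc fun r hr =>
            mul_nonneg (rpow_nonneg hr.1.le _) (exp_pos _).le) hint

end

theorem eventually_exp_neg_mul_rpow_neg_le {κ α C : ℝ} (hκ : 0 < κ) (hα : 0 < α) (hC : 0 < C)
    (b : ℝ) : ∀ᶠ s in 𝓝[>] (0 : ℝ), exp (-(κ * s ^ (-α))) ≤ C * s ^ b := by
  have h := (tendsto_exp_mul_div_rpow_atTop (b / α) κ hκ).comp
    (tendsto_rpow_neg_nhdsGT_zero (neg_lt_zero.2 hα))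
  filter_upwards [h.eventually_ge_atTop C⁻¹, self_mem_nhdsWithin] with s hs (hs₀ : 0 < s)
  rw [Function.comp_apply, ← rpow_mul hs₀.le, show -α * (b / α) = -b by field_simp,
    rpow_neg hs₀.le b, div_inv_eq_mul, inv_le_iff_one_le_mul₀' hC] at hs
  rw [exp_neg, inv_le_iff_one_le_mul₀' (exp_pos _)]
  linarith

theorem eventually_rpow_le {b ε : ℝ} (hb : 0 < b) (hε : 0 < ε) :
    ∀ᶠ s in 𝓝[>] (0 : ℝ), s ^ b ≤ ε := by
  have h := ((continuousAt_rpow_const 0 b (Or.inr hb.le)).tendsto).mono_left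
    (nhdsWithin_le_nhds (s := Ioi 0))
  rw [zero_rpow hb.ne'] at h
  exact h.eventually_le_const hε

theorem eventually_exp_le_integral_rpow_neg_mul_exp_le {a c α ν : ℝ} (ha₀ : 0 ≤ a) (ha : a < 1)
    (hc : 0 < c) (hα : 0 < α) (hν : 0 < ν) :
    ∀ᶠ s in 𝓝[>] (0 : ℝ),
      exp (-((1 + ν) * c * s ^ (-α))) ≤ ∫ r in (0 : ℝ)..s, r ^ (-a) * exp (-(c * r ^ (-α))) ∧
        ∫ r in (0 : ℝ)..s, r ^ (-a) * exp (-(c * r ^ (-α))) ≤ exp (-((1 - ν) * c * s ^ (-α))) := by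
  -- on `[θ s, s]` the exponent `r ^ (-α)` is at most `(1 + ν/2) s ^ (-α)`
  set θ : ℝ := (1 + ν / 2) ^ (-α⁻¹)
  have hθ₀ : 0 < θ := rpow_pos_of_pos (by linarith) _
  have hθ₁ : θ < 1 := rpow_lt_one_of_one_lt_of_neg (by linarith) (neg_lt_zero.2 (inv_pos.2 hα))
  have hθα : θ ^ (-α) = 1 + ν / 2 := by
    rw [← rpow_mul (by linarith), neg_mul_neg, inv_mul_cancel₀ hα.ne', rpow_one]
  filter_upwards [eventually_rpow_le (sub_pos.2 ha) (sub_pos.2 ha),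
    eventually_exp_neg_mul_rpow_neg_le (by positivity : 0 < c * ν / 2) hα (sub_pos.2 hθ₁) (1 - a),
    self_mem_nhdsWithin] with s hsmall hdecay (hs : 0 < s)
  constructor
  · calc exp (-((1 + ν) * c * s ^ (-α)))
        = exp (-(c * ν / 2 * s ^ (-α))) * exp (-(c * (θ * s) ^ (-α))) := by
          rw [← exp_add, mul_rpow hθ₀.le hs.le, hθα]
          ring_nf
      _ ≤ (1 - θ) * s ^ (1 - a) * exp (-(c * (θ * s) ^ (-α))) :=
          mul_le_mul_of_nonneg_right hdecay (exp_pos _).le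
      _ ≤ _ := le_integral_rpow_neg_mul_exp ha₀ ha hc.le hα.le hθ₀ hθ₁.le hs
  · calc _ ≤ exp (-(c * s ^ (-α))) * (s ^ (1 - a) / (1 - a)) :=
          integral_rpow_neg_mul_exp_le ha hc.le hα.le hs
      _ ≤ exp (-(c * s ^ (-α))) :=
          mul_le_of_le_one_right (exp_pos _).le ((div_le_one (sub_pos.2 ha)).2 hsmall)
      _ ≤ exp (-((1 - ν) * c * s ^ (-α))) := by
          have : 0 ≤ ν * c * s ^ (-α) := by positivity
          exact exp_le_exp.2 (by linarith)

theorem stmt_14_general (N : ℕ) (hN : 1 ≤ N) (p α₀ : ℝ) (hp : 1 < p)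
    (hα₀ : 0 < α₀)
    (hconv : (N - 1 : ℝ) * (p - 1) / (p + 3) < 1)
    (ω h g : ℝ → ℝ)
    (hω : ∀ r, ω r = r ^ (2 - α₀))
    (hh : ∀ r, h r = Real.exp (-(ω r) / r ^ 2))
    (hg : ∀ s, g s = (∫ r in (0 : ℝ)..s,
        r ^ (-(N - 1 : ℝ) * (p - 1) / (p + 3)) * (h r) ^ (2 / (p + 3)))
          ^ (-(p + 3) / (p - 1))) :
    ∀ ν₀ > 0, ∃ s₀ > 0, ∀ s ∈ Ioo (0 : ℝ) s₀,
      Real.exp ((2 * (1 - ν₀) / (p - 1)) * (ω s / s ^ 2)) ≤ g s ∧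
        g s ≤ Real.exp ((2 * (1 + ν₀) / (p - 1)) * (ω s / s ^ 2)) := by
  intro ν₀ hν₀
  have ha₀ : 0 ≤ (N - 1 : ℝ) * (p - 1) / (p + 3) := by
    have : (1 : ℝ) ≤ N := by exact_mod_cast hN
    exact div_nonneg (mul_nonneg (by linarith) (by linarith)) (by linarith)
  obtain ⟨s₀, hs₀, hbounds⟩ := mem_nhdsGT_iff_exists_Ioo_subset.1 <|
    eventually_exp_le_integral_rpow_neg_mul_exp_le ha₀ hconv (by positivity : 0 < 2 / (p + 3))
      hα₀ hν₀
  refine ⟨s₀, hs₀, fun s hs => ?_⟩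
  have hωr : ∀ r > 0, ω r / r ^ 2 = r ^ (-α₀) := fun r hr => by
    rw [hω, ← rpow_natCast, ← rpow_sub hr]
    norm_num
  have hgs : g s = (∫ r in (0 : ℝ)..s, r ^ (-((N - 1 : ℝ) * (p - 1) / (p + 3))) *
      exp (-(2 / (p + 3) * r ^ (-α₀)))) ^ (-(p + 3) / (p - 1)) := by
    rw [hg]
    congr 1
    refine integral_congr_Ioo_of_le hs.1.le fun r hr => ?_
    rw [hh, neg_div, hωr r hr.1, ← exp_mul]
    ring_nf
  have hq : -(p + 3) / (p - 1) ≤ 0 := div_nonpos_of_nonpos_of_nonneg (by linarith) (by linarith)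
  obtain ⟨hlower, hupper⟩ := hbounds hs
  rw [hgs, hωr s hs.1]
  constructor
  · calc _ = exp (-((1 - ν₀) * (2 / (p + 3)) * s ^ (-α₀))) ^ (-(p + 3) / (p - 1)) := by
          rw [← exp_mul]
          field_simp
      _ ≤ _ := rpow_le_rpow_of_nonpos ((exp_pos _).trans_le hlower) hupper hq
  · calc _ ≤ exp (-((1 + ν₀) * (2 / (p + 3)) * s ^ (-α₀))) ^ (-(p + 3) / (p - 1)) :=
          rpow_le_rpow_of_nonpos (exp_pos _) hlower hq
      _ = _ := by
          rw [← exp_mul]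
          field_simp

/-- Two-sided asymptotic estimate of
`g(s) = (∫₀^s r^{−(N-1)(p-1)/(p+3)} h(r)^{2/(p+3)} dr)^{−(p+3)/(p-1)}` with
`h(r) = exp(−ω(r)/r²)`, `ω(r) = r^{2−α₀}`: for every `ν₀ > 0` there is `s₀ > 0`
such that for all `s ∈ (0,s₀)`,
`exp((2(1−ν₀)/(p-1)) ω(s)/s²) ≤ g(s) ≤ exp((2(1+ν₀)/(p-1)) ω(s)/s²)`. -/
theorem stmt_14 (N : ℕ) (hN : 1 ≤ N) (p α₀ : ℝ) (hp : 1 < p)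
    (hα₀ : 0 < α₀) (hα₀' : α₀ < 2)
    (hconv : (N - 1 : ℝ) * (p - 1) / (p + 3) < 1)
    (ω h g : ℝ → ℝ)
    (hω : ∀ r, ω r = r ^ (2 - α₀))
    (hh : ∀ r, h r = Real.exp (-(ω r) / r ^ 2))
    (hg : ∀ s, g s = (∫ r in (0 : ℝ)..s,
        r ^ (-(N - 1 : ℝ) * (p - 1) / (p + 3)) * (h r) ^ (2 / (p + 3)))
          ^ (-(p + 3) / (p - 1))) :
    ∀ ν₀ > 0, ∃ s₀ > 0, ∀ s ∈ Ioo (0 : ℝ) s₀,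
      Real.exp ((2 * (1 - ν₀) / (p - 1)) * (ω s / s ^ 2)) ≤ g s ∧
        g s ≤ Real.exp ((2 * (1 + ν₀) / (p - 1)) * (ω s / s ^ 2)) :=
  stmt_14_general N hN p α₀ hp hα₀ hconv ω h g hω hh hg
end
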